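/- arXiv:1004.2907 — 2 statements merged into one kernel-verified Lean document; each statement's English description precedes it below -/
import Mathlib

section
/- Let ⟨·,·⟩ denote the bilinear antisymmetric form and let 𝔤 = V₁ ⊕ V₂ be the free nilpotent Lie algebra of step 2 on k generators, with basis e₁, …, e_k of V₁ and basis {e_{i,j} : 1 ≤ i < j ≤ k} of V₂ satisfying [e_i, e_j] = e_{i,j} for i < j. Suppose k ≥ 2(m+1) and let U := span{ e_{1,2} + e_{3,4} + ⋯ + e_{2m+1,2m+2} } ⊆ V₂. Then for all v₁,…,v_m, w₁,…,w_m ∈ V₁, the vector [v₁,w₁] + ⋯ + [v_m,w_m] lies in U if and only if it equals 0. (That is, U is m-inaccessible with U' = {0}.) -/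
/-!
Identify `V₂` with the alternating `k × k` matrices, so that the bracket `[x, y]` becomes
`x yᵀ - y xᵀ`, a matrix of rank at most `2`; a sum of `m` brackets therefore has rank at most
`2m`. On the other hand the matrix of `e_{1,2} + ⋯ + e_{2m+1,2m+2}` contains, on the rows and
columns `1, …, 2m+2`, a copy of the standard symplectic matrix `J`, which is invertible; so every
nonzero multiple of it has rank at least `2m+2`.
-/

open Classical Matrix

namespace Matrix

variable {m n K : Type*} [Fintype n] [Field K]

theorem rank_add_le (A B : Matrix m n K) : (A + B).rank ≤ A.rank + B.rank := by
  rw [rank, rank, rank, mulVecLin_add]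
  exact (Submodule.finrank_mono (LinearMap.range_add_le _ _)).trans
    (Submodule.finrank_add_le_finrank_add_finrank _ _)

theorem rank_finset_sum_le {ι : Type*} (s : Finset ι) (A : ι → Matrix m n K) :
    (∑ i ∈ s, A i).rank ≤ ∑ i ∈ s, (A i).rank :=
  Finset.sum_hom_rel (r := fun (A : Matrix m n K) r => A.rank ≤ r) (by simp)
    fun _ _ _ h => (rank_add_le _ _).trans (by gcongr)

theorem rank_vecMulVec_sub_vecMulVec_le (x y : n → K) :
    (vecMulVec x y - vecMulVec y x).rank ≤ 2 := by
  rw [sub_eq_add_neg, ← neg_vecMulVec]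
  exact (rank_add_le _ _).trans (add_le_add (rank_vecMulVec_le _ _) (rank_vecMulVec_le _ _))

end Matrix

section SkewOfUpper

variable {ι K : Type*} [LinearOrder ι] [Field K]

def skewOfUpper : ({p : ι × ι // p.1 < p.2} → K) →ₗ[K] Matrix ι ι K where
  toFun z := Matrix.of fun a b =>
    if h : a < b then z ⟨(a, b), h⟩ else if h : b < a then -z ⟨(b, a), h⟩ else 0
  map_add' z z' := by
    ext a b
    simp only [of_apply, Pi.add_apply, Matrix.add_apply]
    split_ifs <;> ring
  map_smul' c z := by
    ext a b
    simp only [of_apply, Pi.smul_apply, Matrix.smul_apply, smul_eq_mul, RingHom.id_apply]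
    split_ifs <;> ring

theorem skewOfUpper_bracket (x y : ι → K) :
    skewOfUpper (fun p => x p.1.1 * y p.1.2 - x p.1.2 * y p.1.1) =
      vecMulVec x y - vecMulVec y x := by
  ext a b
  simp only [skewOfUpper, LinearMap.coe_mk, AddHom.coe_mk, of_apply, Matrix.sub_apply,
    vecMulVec_apply]
  split_ifs with hab hba
  · ring
  · ring
  · obtain rfl := le_antisymm (not_lt.mp hba) (not_lt.mp hab)
    ring

end SkewOfUpper

section StandardSymplectic

variable {K : Type*} [Field K] {k m : ℕ}

/-- `J = fromBlocks 0 (-1) 1 0` pairs `inr j` with `inl j`; these go to the pair `(2j, 2j+1)`. -/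
def symplecticEmbedding (hk : 2 * (m + 1) ≤ k) : Fin (m + 1) ⊕ Fin (m + 1) → Fin k :=
  Sum.elim (fun j => ⟨2 * j + 1, by omega⟩) (fun j => ⟨2 * j, by omega⟩)

theorem skewOfUpper_submatrix_symplecticEmbedding (hk : 2 * (m + 1) ≤ k)
    {u₀ : {p : Fin k × Fin k // p.1 < p.2} → K}
    (hu₀ : ∀ p, u₀ p =
      if ∃ j : ℕ, j ≤ m ∧ ((p.1.1 : ℕ) = 2 * j ∧ (p.1.2 : ℕ) = 2 * j + 1) then 1 else 0) :
    (skewOfUpper u₀).submatrix (symplecticEmbedding hk) (symplecticEmbedding hk) =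
      J (Fin (m + 1)) K := by
  ext (i | i) (j | j) <;>
    simp only [skewOfUpper, symplecticEmbedding, J, hu₀, LinearMap.coe_mk, AddHom.coe_mk,
      submatrix_apply, of_apply, Sum.elim_inl, Sum.elim_inr, fromBlocks_apply₁₁,
      fromBlocks_apply₁₂, fromBlocks_apply₂₁, fromBlocks_apply₂₂, one_apply, Fin.lt_def,
      Fin.ext_iff, Matrix.zero_apply, Matrix.neg_apply] <;>
    split_ifs <;> simp_all <;> omega

theorem two_mul_succ_le_rank_skewOfUpper (hk : 2 * (m + 1) ≤ k)
    {u₀ : {p : Fin k × Fin k // p.1 < p.2} → K}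
    (hu₀ : ∀ p, u₀ p =
      if ∃ j : ℕ, j ≤ m ∧ ((p.1.1 : ℕ) = 2 * j ∧ (p.1.2 : ℕ) = 2 * j + 1) then 1 else 0) :
    2 * (m + 1) ≤ (skewOfUpper u₀).rank :=
  calc 2 * (m + 1) = (J (Fin (m + 1)) K).rank := by
        rw [rank_of_isUnit _ ((isUnit_iff_isUnit_det _).mpr (isUnit_det_J _ _)),
          Fintype.card_sum, Fintype.card_fin, two_mul]
    _ ≤ (skewOfUpper u₀).rank :=
        skewOfUpper_submatrix_symplecticEmbedding hk hu₀ ▸ rank_submatrix_le _ _ _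

end StandardSymplectic

/-- In the free nilpotent Lie algebra of step 2 on `k ≥ 2(m+1)`
generators — with `V₂` spanned by `e_{i,j}` (`i < j`) and
`[x,y] = Σ_{i<j}(x_i y_j − x_j y_i) e_{i,j}` — the line
`U = span{e_{1,2} + e_{3,4} + ⋯ + e_{2m+1,2m+2}}` is `m`-inaccessible with
`U' = {0}`: a sum of `m` brackets lies in `U` iff it is `0`. -/
theorem stmt_8 (k m : ℕ) (hk : 2 * (m + 1) ≤ k)
    (B : (Fin k → ℝ) → (Fin k → ℝ) → ({p : Fin k × Fin k // p.1 < p.2} → ℝ))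
    (hB : ∀ x y p, B x y p = x p.1.1 * y p.1.2 - x p.1.2 * y p.1.1)
    (u₀ : {p : Fin k × Fin k // p.1 < p.2} → ℝ)
    (hu₀ : ∀ p, u₀ p =
      if ∃ j : ℕ, j ≤ m ∧ ((p.1.1 : ℕ) = 2 * j ∧ (p.1.2 : ℕ) = 2 * j + 1)
      then 1 else 0) :
    ∀ v w : Fin m → (Fin k → ℝ),
      (∑ i, B (v i) (w i)) ∈ Submodule.span ℝ {u₀} ↔
      (∑ i, B (v i) (w i)) = 0 := by
  intro v w
  refine ⟨fun hmem => ?_, fun h => h ▸ Submodule.zero_mem _⟩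
  obtain ⟨c, hc⟩ := Submodule.mem_span_singleton.mp hmem
  rcases eq_or_ne c 0 with rfl | hc0
  · rw [← hc, zero_smul]
  exfalso
  have hle : (skewOfUpper (∑ i, B (v i) (w i))).rank ≤ 2 * m := by
    simp only [map_sum, fun x y => funext (hB x y), skewOfUpper_bracket]
    calc _ ≤ ∑ i, (vecMulVec (v i) (w i) - vecMulVec (w i) (v i)).rank := rank_finset_sum_le _ _
      _ ≤ ∑ _i : Fin m, 2 := Finset.sum_le_sum fun i _ => rank_vecMulVec_sub_vecMulVec_le _ _
      _ = 2 * m := by simp [mul_comm]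
  have hge : 2 * (m + 1) ≤ (skewOfUpper (c • u₀)).rank := by
    rw [map_smul, rank_smul_of_mem_nonZeroDivisors _ (mem_nonZeroDivisors_of_ne_zero hc0)]
    exact two_mul_succ_le_rank_skewOfUpper hk hu₀
  rw [hc] at hge
  omega
end

section
/- Let 𝕂 be the quaternions ℍ (or more generally a real composition algebra), and define 𝔤 := 𝕂 ⊕ Im(𝕂) with bracket [z ⊕ z', w ⊕ w'] := 0 ⊕ Im(z w̄) (depending only on the first components). Then 𝔤 is a real Lie algebra, nilpotent of step 2, with center containing 0 ⊕ Im(𝕂), and its first layer 𝕂 contains no 2-dimensional Lie subalgebra: any 2-dimensional subspace S ⊆ 𝕂 ⊕ 0 with [S,S] ⊆ S must be abelian, which forces all elements of S to be pairwise ℝ-proportional, a contradiction. -/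
/-!
The bracket takes values in the second layer, on which it vanishes, so all double brackets
are zero: this gives the Jacobi identity and step-2 nilpotency. A subspace `S` of the first
layer closed under the bracket has `[S, S] ⊆ S ∩ (0 ⊕ Im 𝕂) = 0`, i.e. `Im (z w̄) = 0` for
`z, w ∈ S`. Then `z w̄` is real and `z = (z w̄) w / |w|²`, so `S` has dimension at most one.
-/

open Quaternion

namespace Quaternion

theorem im_mul_star_swap {R : Type*} [CommRing R] (a b : ℍ[R]) :
    (b * star a).im = -(a * star b).im := by
  rw [← im_star, star_mul, star_star]

variable {R : Type*} [Field R] [LinearOrder R] [IsStrictOrderedRing R]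

theorem exists_smul_eq_of_im_mul_star_eq_zero {z w : ℍ[R]} (hw : w ≠ 0)
    (h : (z * star w).im = 0) : ∃ c : R, c • w = z := by
  have hzw : z * star w = ((z * star w).re : ℍ[R]) := by
    conv_lhs => rw [← re_add_im (z * star w), h, add_zero]
  generalize (z * star w).re = r at hzw
  have hn : normSq w ≠ 0 := normSq_eq_zero.not.mpr hw
  refine ⟨(normSq w)⁻¹ * r, ?_⟩
  calc ((normSq w)⁻¹ * r) • w
      = (normSq w)⁻¹ • (z * (star w * w)) := by
        rw [← mul_assoc, hzw, coe_mul_eq_smul, mul_smul]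
    _ = z := by rw [star_mul_self, mul_coe_eq_smul, inv_smul_smul₀ hn]

theorem finrank_le_one_of_im_mul_star_eq_zero (S : Submodule R (ℍ[R] × ℍ[R]))
    (hS₂ : ∀ x ∈ S, x.2 = 0) (hS : ∀ x ∈ S, ∀ y ∈ S, (x.1 * star y.1).im = 0) :
    Module.finrank R S ≤ 1 := by
  have hext : ∀ x ∈ S, ∀ y ∈ S, x.1 = y.1 → x = y := fun x hx y hy h =>
    Prod.ext h ((hS₂ x hx).trans (hS₂ y hy).symm)
  by_cases hv : ∃ v ∈ S, v.1 ≠ 0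
  · obtain ⟨v, hvS, hv0⟩ := hv
    refine finrank_le_one ⟨v, hvS⟩ fun ⟨u, huS⟩ => ?_
    obtain ⟨c, hc⟩ := exists_smul_eq_of_im_mul_star_eq_zero hv0 (hS u huS v hvS)
    exact ⟨c, Subtype.ext (hext _ (S.smul_mem c hvS) u huS hc)⟩
  · push Not at hv
    refine finrank_le_one 0 fun ⟨u, huS⟩ => ⟨0, Subtype.ext ?_⟩
    simpa using (hext u huS 0 S.zero_mem (hv u huS)).symm

end Quaternion

/-- For `𝕂 = ℍ` the quaternions, `𝔤 = 𝕂 ⊕ Im 𝕂` with bracket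
`[z ⊕ z', w ⊕ w'] = 0 ⊕ Im(z w̄)` is a real Lie algebra, nilpotent of step 2,
whose center contains the second layer `0 ⊕ Im 𝕂`, and whose first layer
`𝕂 ⊕ 0` contains no 2-dimensional Lie subalgebra. -/
theorem stmt_14
    (br : Quaternion ℝ × Quaternion ℝ → Quaternion ℝ × Quaternion ℝ →
      Quaternion ℝ × Quaternion ℝ)
    (hbr : ∀ x y, br x y = (0, (x.1 * star y.1).im)) :
    -- ℝ-bilinearity
    (∀ x x' y, br (x + x') y = br x y + br x' y) ∧
    (∀ x y y', br x (y + y') = br x y + br x y') ∧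
    (∀ (r : ℝ) x y, br (r • x) y = r • br x y) ∧
    (∀ (r : ℝ) x y, br x (r • y) = r • br x y) ∧
    -- antisymmetry
    (∀ x y, br x y = -br y x) ∧
    -- Jacobi identity
    (∀ x y z, br x (br y z) + br y (br z x) + br z (br x y) = 0) ∧
    -- nilpotency of step 2
    (∀ x y z, br (br x y) z = 0) ∧
    -- the second layer 0 ⊕ Im 𝕂 is central
    (∀ w : Quaternion ℝ, w.re = 0 →
      ∀ x, br (0, w) x = 0 ∧ br x (0, w) = 0) ∧
    -- the first layer 𝕂 ⊕ 0 contains no 2-dimensional subalgebra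
    ¬∃ S : Submodule ℝ (Quaternion ℝ × Quaternion ℝ),
      (∀ x ∈ S, x.2 = 0) ∧ (∀ x ∈ S, ∀ y ∈ S, br x y ∈ S) ∧
      Module.finrank ℝ S = 2 := by
  refine ⟨?_, ?_, ?_, ?_, ?_, ?_, ?_, ?_, ?_⟩
  · intro x x' y; simp [hbr, add_mul]
  · intro x y y'; simp [hbr, mul_add]
  · intro r x y; simp [hbr]
  · intro r x y; simp [hbr]
  · intro x y; rw [hbr, hbr, im_mul_star_swap y.1 x.1, Prod.neg_mk, neg_zero]
  · intro x y z; simp [hbr]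
  · intro x y z; simp [hbr]
  · intro w _ x; simp [hbr]
  · rintro ⟨S, hS₂, hclosed, hrank⟩
    have := finrank_le_one_of_im_mul_star_eq_zero S hS₂
      fun x hx y hy => by simpa [hbr] using hS₂ _ (hclosed x hx y hy)
    omega
end
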